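/- arXiv:1609.00973 — 5 statements merged into one kernel-verified Lean document; each statement's English description precedes it below -/
import Mathlib

section
/- For every natural number n ≥ 1, if f : [0,1] → ℝ is nondecreasing then its n-th Bernstein polynomial B_nf is nondecreasing on [0,1], and if f is nonincreasing then B_nf is nonincreasing on [0,1]. -/
open Filter Set MeasureTheory
open scoped ENNReal Topology

/-- `l` is a Λ-sequence (indexed from 0, so `l 0` plays the role of `λ₁`):
a nondecreasing sequence of positive reals whose reciprocals have divergent sum. -/
def IsLambdaSeq (l : ℕ → ℝ) : Prop :=
  Monotone l ∧ (∀ n, 0 < l n) ∧ ¬ Summable (fun n => 1 / l n)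

/-- A proper Λ-sequence: additionally `λₙ → ∞`. -/
def IsProperLambdaSeq (l : ℕ → ℝ) : Prop :=
  IsLambdaSeq l ∧ Tendsto l atTop atTop

/-- The Λ-variation of `f` computed over partition points taken from `K`:
the supremum of `∑ⱼ |f(x_{j+1}) - f(x_j)| / λ_{β(j)}` over all `m`, all nondecreasing
tuples `x₁ ≤ … ≤ x_{m+1}` of points of `K` and all permutations `β` of the gaps. -/
noncomputable def lamVarOn (l : ℕ → ℝ) (f : ℝ → ℝ) (K : Set ℝ) : ℝ≥0∞ :=
  ⨆ (m : ℕ) (x : Fin (m + 1) → ℝ) (_ : Monotone x) (_ : ∀ j, x j ∈ K)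
    (β : Equiv.Perm (Fin m)),
    ∑ j : Fin m, ENNReal.ofReal (|f (x j.succ) - f (x j.castSucc)| / l (β j))

/-- The Λ-variation of `f : [0,1] → ℝ`. -/
noncomputable def lamVar (l : ℕ → ℝ) (f : ℝ → ℝ) : ℝ≥0∞ :=
  lamVarOn l f (Set.Icc 0 1)

/-- The norm `‖f‖_Λ = V_Λ(f) + |f 0|` (valued in `[0,∞]`). -/
noncomputable def lamNorm (l : ℕ → ℝ) (f : ℝ → ℝ) : ℝ≥0∞ :=
  lamVar l f + ENNReal.ofReal |f 0|

/-- `f` is continuous in Λ-variation: `V_{Λ_(m)}(f) → 0` as `m → ∞`. -/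
def ContInLamVar (l : ℕ → ℝ) (f : ℝ → ℝ) : Prop :=
  Tendsto (fun m => lamVar (fun n => l (n + m)) f) atTop (𝓝 0)

/-- The restricted Λ-variation `V_{Λ,δ}(f)`: the supremum of `∑ⱼ |f(bⱼ) - f(aⱼ)| / λⱼ`
over all finite sequences of nonoverlapping closed subintervals `[aⱼ, bⱼ]` of `[0,1]`
of length at most `δ`, listed in any order. -/
noncomputable def lamVarDelta (l : ℕ → ℝ) (δ : ℝ) (f : ℝ → ℝ) : ℝ≥0∞ :=
  ⨆ (k : ℕ) (a : Fin k → ℝ) (b : Fin k → ℝ)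
    (_ : ∀ j, 0 ≤ a j ∧ a j ≤ b j ∧ b j ≤ 1 ∧ b j - a j ≤ δ)
    (_ : ∀ i j, i ≠ j → b i ≤ a j ∨ b j ≤ a i),
    ∑ j : Fin k, ENNReal.ofReal (|f (b j) - f (a j)| / l j)

/-- The `n`-th Bernstein polynomial of `f : [0,1] → ℝ`. -/
noncomputable def bern (n : ℕ) (f : ℝ → ℝ) (x : ℝ) : ℝ :=
  ∑ k ∈ Finset.range (n + 1),
    f ((k : ℝ) / n) * (n.choose k : ℝ) * x ^ k * (1 - x) ^ (n - k)

/-- The `n`-th Kantorovich polynomial of `f : [0,1] → ℝ`. -/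
noncomputable def kant (n : ℕ) (f : ℝ → ℝ) (x : ℝ) : ℝ :=
  ∑ k ∈ Finset.range (n + 1),
    (n.choose k : ℝ) * x ^ k * (1 - x) ^ (n - k) *
      ((n + 1) * ∫ t in ((k : ℝ) / (n + 1))..(((k : ℝ) + 1) / (n + 1)), f t)

/-!
Write `B_n f = ∑ₖ f(k/n) bₙₖ` in the Bernstein basis `bₙₖ = C(n,k) Xᵏ (1 - X)ⁿ⁻ᵏ`. Since
`b'ₙ₊₁,ₖ = (n + 1) (bₙ,ₖ₋₁ - bₙₖ)`, summation by parts gives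
`(B_{n+1} f)' = (n + 1) ∑ₖ (f((k+1)/(n+1)) - f(k/(n+1))) bₙₖ`, and the `bₙₖ` are nonnegative on
`[0,1]`: the derivative has the sign of the forward differences of `f`.
-/

open Polynomial

namespace bernsteinPolynomial

theorem derivative_sum_C_mul {R : Type*} [CommRing R] (n : ℕ) (a : ℕ → R) :
    derivative (∑ k ∈ Finset.range (n + 2), C (a k) * bernsteinPolynomial R (n + 1) k) =
      (n + 1 : R[X]) * ∑ k ∈ Finset.range (n + 1), C (a (k + 1) - a k) * bernsteinPolynomial R n k := by
  -- summation by parts; the boundary term vanishes because `b_{n, n+1} = 0`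
  have shift : ∑ k ∈ Finset.range (n + 1), C (a (k + 1)) * bernsteinPolynomial R n (k + 1) +
      C (a 0) * bernsteinPolynomial R n 0 =
      ∑ k ∈ Finset.range (n + 1), C (a k) * bernsteinPolynomial R n k := by
    rw [← Finset.sum_range_succ' (fun k => C (a k) * bernsteinPolynomial R n k),
      Finset.sum_range_succ, eq_zero_of_lt R n.lt_succ_self, mul_zero, add_zero]
  rw [Finset.sum_range_succ', derivative_add, derivative_sum]
  simp only [derivative_C_mul, derivative_succ_aux, derivative_zero, mul_left_comm (C _), mul_sub,
    C_sub, sub_mul, Finset.sum_sub_distrib, ← Finset.mul_sum]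
  push_cast
  linear_combination (-(n + 1 : R[X])) * shift

theorem eval_nonneg {R : Type*} [CommRing R] [PartialOrder R] [IsOrderedRing R] (n k : ℕ) {x : R}
    (hx : x ∈ Set.Icc 0 1) : 0 ≤ (bernsteinPolynomial R n k).eval x := by
  obtain ⟨hx₀, hx₁⟩ := hx
  have : 0 ≤ 1 - x := sub_nonneg.2 hx₁
  simp only [bernsteinPolynomial, eval_mul, eval_pow, eval_sub, eval_one, eval_X, eval_natCast]
  positivity

end bernsteinPolynomial

noncomputable def bernPoly (n : ℕ) (f : ℝ → ℝ) : ℝ[X] :=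
  ∑ k ∈ Finset.range (n + 1), C (f (k / n)) * bernsteinPolynomial ℝ n k

theorem bern_eq_eval_bernPoly (n : ℕ) (f : ℝ → ℝ) : bern n f = fun x => (bernPoly n f).eval x := by
  funext x
  simp only [bern, bernPoly, eval_finsetSum, eval_mul, eval_C, bernsteinPolynomial, eval_pow,
    eval_sub, eval_one, eval_X, eval_natCast, mul_assoc]

theorem derivative_bernPoly_succ (n : ℕ) (f : ℝ → ℝ) :
    derivative (bernPoly (n + 1) f) = (n + 1 : ℝ[X]) *
      ∑ k ∈ Finset.range (n + 1),
        C (f ((k + 1) / (n + 1)) - f (k / (n + 1))) * bernsteinPolynomial ℝ n k := by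
  have h := bernsteinPolynomial.derivative_sum_C_mul n (fun k : ℕ => f (k / (n + 1 : ℕ)))
  rw [bernPoly]
  push_cast at h ⊢
  exact h

theorem bern_neg (n : ℕ) (f : ℝ → ℝ) : bern n (-f) = -bern n f := by
  funext x
  simp [bern, ← Finset.sum_neg_distrib]

theorem monotoneOn_bern {n : ℕ} {f : ℝ → ℝ} (hf : MonotoneOn f (Icc 0 1)) :
    MonotoneOn (bern n f) (Icc 0 1) := by
  rw [bern_eq_eval_bernPoly]
  cases n with
  | zero => simp [bernPoly, bernsteinPolynomial, monotoneOn_const]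
  | succ n =>
    refine monotoneOn_of_deriv_nonneg (convex_Icc 0 1) (bernPoly _ f).continuousOn
      (bernPoly _ f).differentiableOn fun x hx => ?_
    have hx : x ∈ Icc (0 : ℝ) 1 := interior_subset hx
    rw [Polynomial.deriv, derivative_bernPoly_succ]
    simp only [eval_mul, eval_finsetSum, eval_C, eval_add, eval_natCast, eval_one]
    refine mul_nonneg (by positivity) (Finset.sum_nonneg fun k hk => mul_nonneg ?_
      (bernsteinPolynomial.eval_nonneg n k hx))
    have hk : (k : ℝ) + 1 ≤ n + 1 := by exact_mod_cast Finset.mem_range.1 hk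
    refine sub_nonneg.2 (hf ⟨by positivity, ?_⟩ ⟨by positivity, ?_⟩ (by gcongr; linarith))
    all_goals rw [div_le_one (by positivity)]; linarith

theorem antitoneOn_bern {n : ℕ} {f : ℝ → ℝ} (hf : AntitoneOn f (Icc 0 1)) :
    AntitoneOn (bern n f) (Icc 0 1) := by
  have := monotoneOn_bern (n := n) (f := -f) fun a ha b hb hab => neg_le_neg (hf ha hb hab)
  rw [bern_neg] at this
  exact fun a ha b hb hab => neg_le_neg_iff.1 (this ha hb hab)

theorem bernstein_preserves_monotonicity_general (n : ℕ) (f : ℝ → ℝ) :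
    (MonotoneOn f (Set.Icc 0 1) → MonotoneOn (bern n f) (Set.Icc 0 1)) ∧
    (AntitoneOn f (Set.Icc 0 1) → AntitoneOn (bern n f) (Set.Icc 0 1)) :=
  ⟨monotoneOn_bern, antitoneOn_bern⟩

/-- For every `n ≥ 1`, if `f : [0,1] → ℝ` is nondecreasing then `B_n f` is
nondecreasing on `[0,1]`, and if `f` is nonincreasing then `B_n f` is nonincreasing on `[0,1]`. -/
theorem bernstein_preserves_monotonicity (n : ℕ) (hn : 1 ≤ n) (f : ℝ → ℝ) :
    (MonotoneOn f (Set.Icc 0 1) → MonotoneOn (bern n f) (Set.Icc 0 1)) ∧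
    (AntitoneOn f (Set.Icc 0 1) → AntitoneOn (bern n f) (Set.Icc 0 1)) :=
  bernstein_preserves_monotonicity_general n f
end

section
/- If Λ is a Λ-sequence and f : [0,1] → ℝ is of bounded Λ-variation, then V_Λ(B_nf) ≤ V_Λ(f) for every n ≥ 1 (the Bernstein polynomials diminish the Λ-variation). -/
open Filter Set MeasureTheory
open scoped ENNReal Topology

/-!
The Bernstein operator is an average of compositions with random partitions. Given
`0 ≤ x₀ ≤ … ≤ xₘ ≤ 1`, draw `n` independent samples `ω₁, …, ωₙ` from the law on
`{0, …, m + 1}` whose distribution function is `j ↦ xⱼ`. The number of samples `≤ j` is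
binomial with parameters `(n, xⱼ)`, so `Bₙf(xⱼ) = 𝔼 f(Fω(j))`, where `Fω` is the empirical
distribution function of `ω`. For every outcome `ω` the points `Fω(0) ≤ … ≤ Fω(m)` again form a
partition of `[0, 1]`, and a Λ-sum is convex in the values it is applied to, so each Λ-sum of
`Bₙf` is at most an average of Λ-sums of `f`, each bounded by `V_Λ(f)`.
-/

open Finset

section Binomial

variable {ι κ R : Type*} [Fintype ι] [DecidableEq ι] [Fintype κ] [DecidableEq κ] [CommSemiring R]

theorem sum_pi_filter_prod_eq (p : ι → R) (A : Finset ι) (s : Finset κ) :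
    ∑ ω : κ → ι with ({i | ω i ∈ A} : Finset κ) = s, ∏ i, p (ω i) =
      (∑ t ∈ A, p t) ^ #s * (∑ t ∈ Aᶜ, p t) ^ #sᶜ := by
  have hfiber : ({ω : κ → ι | ({i | ω i ∈ A} : Finset κ) = s} : Finset (κ → ι)) =
      Fintype.piFinset fun i => if i ∈ s then A else Aᶜ := by
    ext ω
    simp only [Finset.mem_filter, Finset.mem_univ, true_and, Fintype.mem_piFinset,
      Finset.ext_iff]
    refine forall_congr' fun i => ?_
    by_cases hi : i ∈ s <;> simp [hi]
  rw [hfiber, ← prod_univ_sum, ← prod_mul_prod_compl s, ← prod_const, ← prod_const]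
  congr 1
  · exact prod_congr rfl fun i hi => by rw [if_pos hi]
  · exact prod_congr rfl fun i hi => by rw [if_neg (Finset.mem_compl.mp hi)]

theorem sum_pi_prod_mul_card_filter_mem (p : ι → R) (A : Finset ι) (g : ℕ → R) (n : ℕ) :
    ∑ ω : Fin n → ι, (∏ i, p (ω i)) * g (#{i | ω i ∈ A}) =
      ∑ k ∈ range (n + 1),
        n.choose k * (∑ t ∈ A, p t) ^ k * (∑ t ∈ Aᶜ, p t) ^ (n - k) * g k := by
  calc ∑ ω : Fin n → ι, (∏ i, p (ω i)) * g (#{i | ω i ∈ A})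
      = ∑ s : Finset (Fin n), ∑ ω : Fin n → ι with ({i | ω i ∈ A} : Finset (Fin n)) = s,
          (∏ i, p (ω i)) * g #s := by
        rw [← sum_fiberwise univ (fun ω : Fin n → ι => ({i | ω i ∈ A} : Finset (Fin n)))]
        refine sum_congr rfl fun s _ => sum_congr rfl fun ω hω => ?_
        rw [(Finset.mem_filter.mp hω).2]
    _ = ∑ s : Finset (Fin n), (∑ t ∈ A, p t) ^ #s * (∑ t ∈ Aᶜ, p t) ^ (n - #s) * g #s := by
        refine sum_congr rfl fun s _ => ?_
        rw [← sum_mul, sum_pi_filter_prod_eq, card_compl, Fintype.card_fin]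
    _ = _ := by
        rw [← Finset.powerset_univ, sum_powerset_apply_card
          (fun k => (∑ t ∈ A, p t) ^ k * (∑ t ∈ Aᶜ, p t) ^ (n - k) * g k),
          card_univ, Fintype.card_fin]
        simp only [nsmul_eq_mul, mul_assoc]

end Binomial

theorem bern_sum_eq_sum_pi {ι : Type*} [Fintype ι] [DecidableEq ι] (n : ℕ) (f : ℝ → ℝ)
    (p : ι → ℝ) (hp : ∑ t, p t = 1) (A : Finset ι) :
    bern n f (∑ t ∈ A, p t) = ∑ ω : Fin n → ι, (∏ i, p (ω i)) * f (#{i | ω i ∈ A} / n) := by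
  have hcompl : ∑ t ∈ Aᶜ, p t = 1 - ∑ t ∈ A, p t := by
    rw [← hp, ← sum_add_sum_compl A p, add_sub_cancel_left]
  rw [sum_pi_prod_mul_card_filter_mem p A (fun k => f (k / n)), hcompl, bern]
  exact sum_congr rfl fun k _ => by ring

section LamSum

variable (l : ℕ → ℝ) {m : ℕ} (β : Equiv.Perm (Fin m))

noncomputable def lamSum (v : Fin (m + 1) → ℝ) : ℝ≥0∞ :=
  ∑ j : Fin m, ENNReal.ofReal (|v j.succ - v j.castSucc| / l (β j))

variable {l β}

theorem lamSum_comp_le_lamVarOn {f : ℝ → ℝ} {K : Set ℝ} {x : Fin (m + 1) → ℝ}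
    (hx : Monotone x) (hxK : ∀ j, x j ∈ K) : lamSum l β (f ∘ x) ≤ lamVarOn l f K :=
  le_iSup_of_le m <| le_iSup_of_le x <| le_iSup_of_le hx <| le_iSup_of_le hxK <|
    le_iSup_of_le β le_rfl

theorem lamSum_sum_smul_le {Ω : Type*} [Fintype Ω] (hl : ∀ k, 0 ≤ l k) {w : Ω → ℝ}
    (hw : ∀ ω, 0 ≤ w ω) (v : Ω → Fin (m + 1) → ℝ) :
    lamSum l β (∑ ω, w ω • v ω) ≤ ∑ ω, ENNReal.ofReal (w ω) * lamSum l β (v ω) := by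
  have hterm : ∀ ω (j : Fin m), 0 ≤ w ω * (|v ω j.succ - v ω j.castSucc| / l (β j)) :=
    fun ω j => mul_nonneg (hw ω) (div_nonneg (abs_nonneg _) (hl _))
  calc lamSum l β (∑ ω, w ω • v ω)
      ≤ ∑ j : Fin m, ENNReal.ofReal
          (∑ ω, w ω * (|v ω j.succ - v ω j.castSucc| / l (β j))) := by
        refine sum_le_sum fun j _ => ENNReal.ofReal_le_ofReal ?_
        simp only [Finset.sum_apply, Pi.smul_apply, smul_eq_mul, ← sum_sub_distrib,
          ← mul_sub, ← mul_div_assoc, ← sum_div]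
        refine div_le_div_of_nonneg_right ((abs_sum_le_sum_abs _ _).trans_eq ?_) (hl _)
        exact sum_congr rfl fun ω _ => by rw [abs_mul, abs_of_nonneg (hw ω)]
    _ = ∑ ω, ENNReal.ofReal (w ω) * lamSum l β (v ω) := by
        simp_rw [ENNReal.ofReal_sum_of_nonneg fun ω _ => hterm ω _, lamSum, mul_sum,
          ← ENNReal.ofReal_mul (hw _)]
        exact sum_comm

theorem lamSum_sum_smul_comp_le_lamVarOn {Ω : Type*} [Fintype Ω] (hl : ∀ k, 0 ≤ l k)
    {f : ℝ → ℝ} {K : Set ℝ} {w : Ω → ℝ} (hw : ∀ ω, 0 ≤ w ω) (hw1 : ∑ ω, w ω = 1)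
    {x : Ω → Fin (m + 1) → ℝ} (hx : ∀ ω, Monotone (x ω)) (hxK : ∀ ω j, x ω j ∈ K) :
    lamSum l β (∑ ω, w ω • (f ∘ x ω)) ≤ lamVarOn l f K :=
  calc lamSum l β (∑ ω, w ω • (f ∘ x ω))
      ≤ ∑ ω, ENNReal.ofReal (w ω) * lamSum l β (f ∘ x ω) := lamSum_sum_smul_le hl hw _
    _ ≤ ∑ ω, ENNReal.ofReal (w ω) * lamVarOn l f K :=
        sum_le_sum fun ω _ => mul_le_mul_right (lamSum_comp_le_lamVarOn (hx ω) (hxK ω)) _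
    _ = lamVarOn l f K := by
        rw [← sum_mul, ← ENNReal.ofReal_sum_of_nonneg fun ω _ => hw ω, hw1, ENNReal.ofReal_one,
          one_mul]

end LamSum

theorem lamVarOn_le {l : ℕ → ℝ} {f : ℝ → ℝ} {K : Set ℝ} {c : ℝ≥0∞}
    (h : ∀ m (x : Fin (m + 1) → ℝ), Monotone x → (∀ j, x j ∈ K) →
      ∀ β : Equiv.Perm (Fin m), lamSum l β (f ∘ x) ≤ c) :
    lamVarOn l f K ≤ c :=
  iSup_le fun m => iSup_le fun x => iSup_le fun hx => iSup_le fun hxK => iSup_le fun β =>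
    h m x hx hxK β

section Coupling

variable {m : ℕ}

def unitPad (x : Fin (m + 1) → ℝ) : ℕ → ℝ
  | 0 => 0
  | k + 1 => if h : k ≤ m then x ⟨k, Nat.lt_succ_of_le h⟩ else 1

theorem monotone_unitPad {x : Fin (m + 1) → ℝ} (hx : Monotone x)
    (hxI : ∀ j, x j ∈ Set.Icc 0 1) : Monotone (unitPad x) := by
  refine monotone_nat_of_le_succ fun k => ?_
  rcases k with _ | k
  · simpa [unitPad] using (hxI 0).1
  · simp only [unitPad]
    split_ifs with hk hk'
    · exact hx (Fin.mk_le_mk.mpr k.le_succ)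
    · exact (hxI _).2
    · omega
    · exact le_rfl

theorem exists_weights_sum_Iic_eq {x : Fin (m + 1) → ℝ} (hx : Monotone x)
    (hxI : ∀ j, x j ∈ Set.Icc 0 1) :
    ∃ p : Fin (m + 2) → ℝ, (∀ t, 0 ≤ p t) ∧ ∑ t, p t = 1 ∧
      ∀ j : Fin (m + 1), ∑ t ∈ Iic j.castSucc, p t = x j := by
  set z := unitPad x
  have hsum : ∀ c : Fin (m + 2), ∑ t ∈ Iic c, (z (t + 1) - z t) = z (c + 1) := by
    intro c
    calc ∑ t ∈ Finset.Iic c, (z (t + 1) - z t)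
        = ∑ k ∈ (Finset.Iic c).map Fin.valEmbedding, (z (k + 1) - z k) :=
          (sum_map _ Fin.valEmbedding fun k => z (k + 1) - z k).symm
      _ = z (c + 1) := by
        rw [Fin.map_valEmbedding_Iic, ← Nat.range_succ_eq_Iic, sum_range_sub]
        simp [z, unitPad]
  refine ⟨fun t => z (t + 1) - z t, fun t => sub_nonneg.mpr (monotone_unitPad hx hxI t.val.le_succ),
    ?_, fun j => ?_⟩
  · show ∑ t : Fin (m + 2), (z (t + 1) - z t) = 1
    rw [← Finset.Iic_top, Fin.top_eq_last, hsum]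
    simp [z, unitPad]
  · rw [hsum]
    simp [z, unitPad, Nat.lt_succ_iff.mp j.isLt]

end Coupling

section EmpiricalCDF

variable {n : ℕ} {α : Type*} [LinearOrder α]

noncomputable def empiricalCDF (ω : Fin n → α) (a : α) : ℝ := #{i | ω i ≤ a} / n

theorem monotone_empiricalCDF (ω : Fin n → α) : Monotone (empiricalCDF ω) := fun _ _ hab =>
  div_le_div_of_nonneg_right (Nat.cast_le.mpr <| card_le_card <| monotone_filter_right _
    fun _ _ hi => hi.trans hab) n.cast_nonneg

theorem empiricalCDF_mem_Icc (ω : Fin n → α) (a : α) : empiricalCDF ω a ∈ Set.Icc 0 1 := by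
  refine ⟨by unfold empiricalCDF; positivity, div_le_one_of_le₀ ?_ n.cast_nonneg⟩
  exact_mod_cast (card_filter_le _ _).trans (card_fin n).le

theorem bern_sum_Iic_eq_sum_empiricalCDF [Fintype α] [LocallyFiniteOrderBot α] (f : ℝ → ℝ)
    (p : α → ℝ) (hp : ∑ t, p t = 1) (a : α) :
    bern n f (∑ t ∈ Iic a, p t) = ∑ ω : Fin n → α, (∏ i, p (ω i)) * f (empiricalCDF ω a) := by
  simp only [bern_sum_eq_sum_pi n f p hp, Finset.mem_Iic, empiricalCDF]

end EmpiricalCDF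

theorem bernstein_diminishes_lamVar_general (l : ℕ → ℝ) (hl : IsLambdaSeq l)
    (f : ℝ → ℝ) (n : ℕ) :
    lamVar l (bern n f) ≤ lamVar l f := by
  refine lamVarOn_le fun m x hx hxI β => ?_
  obtain ⟨p, hp0, hp1, hpx⟩ := exists_weights_sum_Iic_eq hx hxI
  have hB : bern n f ∘ x = ∑ ω : Fin n → Fin (m + 2),
      (∏ i, p (ω i)) • (f ∘ fun j => empiricalCDF ω j.castSucc) := by
    funext j
    simp [← hpx j, bern_sum_Iic_eq_sum_empiricalCDF f p hp1]
  have hw1 : ∑ ω : Fin n → Fin (m + 2), ∏ i, p (ω i) = 1 := by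
    rw [← Fintype.prod_sum (fun (_ : Fin n) t => p t), hp1, prod_const_one]
  rw [hB]
  exact lamSum_sum_smul_comp_le_lamVarOn (fun k => (hl.2.1 k).le)
    (fun ω => prod_nonneg fun i _ => hp0 (ω i)) hw1
    (fun ω => (monotone_empiricalCDF ω).comp Fin.strictMono_castSucc.monotone)
    (fun ω j => empiricalCDF_mem_Icc ω _)

/-- The Bernstein polynomials diminish the Λ-variation:
if `Λ` is a Λ-sequence and `f ∈ ΛBV`, then `V_Λ(B_n f) ≤ V_Λ(f)` for every `n ≥ 1`. -/
theorem bernstein_diminishes_lamVar (l : ℕ → ℝ) (hl : IsLambdaSeq l)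
    (f : ℝ → ℝ) (hf : lamVar l f < ⊤) (n : ℕ) (hn : 1 ≤ n) :
    lamVar l (bern n f) ≤ lamVar l f :=
  bernstein_diminishes_lamVar_general l hl f n
end

section
/- Let f : [0,1] → ℝ be the piecewise linear function f(x) = 1.5x for 0 ≤ x ≤ 1/3, f(x) = 0.5 for 1/3 < x ≤ 2/3, and f(x) = 1.5x − 0.5 for 2/3 < x ≤ 1. For every Λ-sequence Λ and every δ with 2/3 < δ < 1, one has V_{Λ,δ}(f) = (f(δ) − f(0))/λ_1 + (f(1) − f(δ))/λ_2 = (1.5δ − 0.5)/λ_1 + (1.5 − 1.5δ)/λ_2. -/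
open Filter Set MeasureTheory
open scoped ENNReal Topology

/-- The piecewise linear function of the counterexample. -/
noncomputable def fex (x : ℝ) : ℝ :=
  if x ≤ 1 / 3 then 1.5 * x else if x ≤ 2 / 3 then 0.5 else 1.5 * x - 0.5

lemma fex_zero : fex 0 = 0 := by norm_num [fex]
lemma fex_one : fex 1 = 1 := by norm_num [fex]
lemma fex_of_gt {x : ℝ} (h : 2/3 < x) : fex x = 1.5 * x - 0.5 := by
  rw [fex, if_neg (by linarith), if_neg (by linarith)]
lemma fex_mono : Monotone fex := by
  intro x y hxy; unfold fex; split_ifs <;> linarith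
lemma fex_incr_le {δ a b : ℝ} (hδ1 : 2/3 < δ) (hδ2 : δ < 1) (ha : 0 ≤ a)
    (hab : a ≤ b) (hb : b ≤ 1) (hlen : b - a ≤ δ) : fex b - fex a ≤ 1.5 * δ - 0.5 := by
  unfold fex; split_ifs <;> linarith

lemma sum_incr_le (f : ℝ → ℝ) (hf : Monotone f) {k : ℕ} (a b : Fin k → ℝ)
    (hd : ∀ i j, i ≠ j → b i ≤ a j ∨ b j ≤ a i) (s : Finset (Fin k))
    (h0 : ∀ j ∈ s, 0 ≤ a j) (hlt : ∀ j ∈ s, a j < b j) :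
    ∀ T, 0 ≤ T → (∀ j ∈ s, b j ≤ T) → ∑ j ∈ s, (f (b j) - f (a j)) ≤ f T - f 0 := by
  induction s using Finset.strongInduction with
  | _ s ih =>
    intro T hT hbT
    rcases s.eq_empty_or_nonempty with rfl | hne
    · simpa using hf hT
    · obtain ⟨j0, hj0, hmax⟩ := s.exists_max_image b hne
      have key2 : ∀ j ∈ s.erase j0, b j ≤ a j0 := by
        intro j hj
        have hjs := Finset.mem_of_mem_erase hj
        have hne' : j ≠ j0 := Finset.ne_of_mem_erase hj
        rcases hd j j0 hne' with h | h
        · exact h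
        · exact absurd h (by have := hlt j hjs; have := hmax j hjs; linarith)
      have IH := ih (s.erase j0) (Finset.erase_ssubset hj0)
        (fun j hj => h0 j (Finset.mem_of_mem_erase hj))
        (fun j hj => hlt j (Finset.mem_of_mem_erase hj))
        (a j0) (h0 j0 hj0) key2
      have h1 : f (b j0) ≤ f T := hf (hbT j0 hj0)
      have h2 : ∑ j ∈ s, (f (b j) - f (a j))
          = (f (b j0) - f (a j0)) + ∑ j ∈ s.erase j0, (f (b j) - f (a j)) :=
        (Finset.add_sum_erase s _ hj0).symm
      linarith


/-- For every Λ-sequence `Λ` and `2/3 < δ < 1`,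
`V_{Λ,δ}(f) = (f(δ) - f(0))/λ₁ + (f(1) - f(δ))/λ₂ = (1.5δ - 0.5)/λ₁ + (1.5 - 1.5δ)/λ₂`. -/
theorem lamVarDelta_fex (l : ℕ → ℝ) (hl : IsLambdaSeq l) (δ : ℝ)
    (hδ1 : 2 / 3 < δ) (hδ2 : δ < 1) :
    lamVarDelta l δ fex = ENNReal.ofReal ((fex δ - fex 0) / l 0 + (fex 1 - fex δ) / l 1) ∧
    lamVarDelta l δ fex = ENNReal.ofReal ((1.5 * δ - 0.5) / l 0 + (1.5 - 1.5 * δ) / l 1) := by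
  obtain ⟨hmono, hpos, -⟩ := hl
  have hl0 : (0:ℝ) < l 0 := hpos 0
  have hl1 : (0:ℝ) < l 1 := hpos 1
  have hl01 : l 0 ≤ l 1 := hmono (by norm_num)
  set M : ℝ := 1.5 * δ - 0.5 with hM
  have hM0 : 0 < M := by rw [hM]; linarith
  have hM1 : M < 1 := by rw [hM]; linarith
  have hfexδ : fex δ = M := fex_of_gt hδ1
  have key : lamVarDelta l δ fex = ENNReal.ofReal (M / l 0 + (1 - M) / l 1) := by
    apply le_antisymm
    · -- upper bound
      refine iSup_le fun k => iSup_le fun a => iSup_le fun b => iSup_le fun h1 =>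
        iSup_le fun h2 => ?_
      have hterm : ∀ j : Fin k, |fex (b j) - fex (a j)| / l j
          = (fex (b j) - fex (a j)) / l j := by
        intro j
        rw [abs_of_nonneg (sub_nonneg.2 (fex_mono (h1 j).2.1))]
      have hnn : ∀ j : Fin k, 0 ≤ (fex (b j) - fex (a j)) / l (j : ℕ) := fun j =>
        div_nonneg (sub_nonneg.2 (fex_mono (h1 j).2.1)) (hpos _).le
      calc ∑ j : Fin k, ENNReal.ofReal (|fex (b j) - fex (a j)| / l j)
          = ENNReal.ofReal (∑ j : Fin k, (fex (b j) - fex (a j)) / l j) := by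
            simp_rw [hterm]
            exact (ENNReal.ofReal_sum_of_nonneg (fun j _ => hnn j)).symm
        _ ≤ ENNReal.ofReal (M / l 0 + (1 - M) / l 1) := by
            apply ENNReal.ofReal_le_ofReal
            -- real inequality
            have hsum1 : ∑ j : Fin k, (fex (b j) - fex (a j)) ≤ 1 := by
              have hfilter : ∑ j ∈ Finset.univ.filter (fun j : Fin k => a j < b j),
                  (fex (b j) - fex (a j)) = ∑ j : Fin k, (fex (b j) - fex (a j)) := by
                apply Finset.sum_filter_of_ne
                intro j _ hne
                rcases lt_or_eq_of_le (h1 j).2.1 with h | h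
                · exact h
                · exact absurd (by rw [h]; ring) hne
              have := sum_incr_le fex fex_mono a b h2
                (Finset.univ.filter (fun j : Fin k => a j < b j))
                (fun j _ => (h1 j).1)
                (fun j hj => (Finset.mem_filter.1 hj).2)
                1 zero_le_one (fun j _ => (h1 j).2.2.1)
              rw [hfilter] at this
              rw [fex_one, fex_zero] at this
              linarith

            match k with
            | 0 =>
              simp only [Finset.univ_eq_empty, Finset.sum_empty]
              have : 0 ≤ (1 - M) / l 1 := div_nonneg (by linarith) hl1.le
              have : 0 ≤ M / l 0 := div_nonneg hM0.le hl0.le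
              linarith
            | (k' + 1) =>
              rw [Fin.sum_univ_succ]
              have hv0M : fex (b 0) - fex (a 0) ≤ M := by
                obtain ⟨ha0, hab0, hb0, hlen0⟩ := h1 0
                exact fex_incr_le hδ1 hδ2 ha0 hab0 hb0 hlen0
              have hv0nn : 0 ≤ fex (b 0) - fex (a 0) := sub_nonneg.2 (fex_mono (h1 0).2.1)
              have htail : ∑ j : Fin k', (fex (b j.succ) - fex (a j.succ)) / l (j.succ : ℕ)
                  ≤ (∑ j : Fin k', (fex (b j.succ) - fex (a j.succ))) / l 1 := by
                rw [Finset.sum_div]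
                apply Finset.sum_le_sum
                intro j _
                have hvnn : 0 ≤ fex (b j.succ) - fex (a j.succ) :=
                  sub_nonneg.2 (fex_mono (h1 j.succ).2.1)
                have hll : l 1 ≤ l (j.succ : ℕ) := hmono (by simp [Fin.val_succ])
                exact div_le_div_of_nonneg_left hvnn hl1 hll
              have hsplit : ∑ j : Fin k', (fex (b j.succ) - fex (a j.succ))
                  = (∑ j : Fin (k'+1), (fex (b j) - fex (a j))) - (fex (b 0) - fex (a 0)) := by
                rw [Fin.sum_univ_succ]; ring
              have htail1 : (∑ j : Fin k', (fex (b j.succ) - fex (a j.succ))) / l 1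
                  ≤ (1 - (fex (b 0) - fex (a 0))) / l 1 :=
                div_le_div_of_nonneg_right (by rw [hsplit]; linarith) hl1.le
              have hd1 : (M - (fex (b 0) - fex (a 0))) / l 1
                  ≤ (M - (fex (b 0) - fex (a 0))) / l 0 :=
                div_le_div_of_nonneg_left (by linarith) hl0 hl01
              have hcast : ((0 : Fin (k'+1)) : ℕ) = 0 := rfl
              rw [hcast]
              have e1 : (fex (b 0) - fex (a 0)) / l 0 + (M - (fex (b 0) - fex (a 0))) / l 0
                  = M / l 0 := by ring
              have e2 : (1 - (fex (b 0) - fex (a 0))) / l 1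
                  = (M - (fex (b 0) - fex (a 0))) / l 1 + (1 - M) / l 1 := by ring
              have := htail.trans htail1
              linarith
    · -- lower bound
      have h1c : ∀ j : Fin 2, 0 ≤ (![0, δ] : Fin 2 → ℝ) j ∧
          (![0, δ] : Fin 2 → ℝ) j ≤ (![δ, 1] : Fin 2 → ℝ) j ∧
          (![δ, 1] : Fin 2 → ℝ) j ≤ 1 ∧
          (![δ, 1] : Fin 2 → ℝ) j - (![0, δ] : Fin 2 → ℝ) j ≤ δ := by
        intro j
        fin_cases j <;> refine ⟨?_, ?_, ?_, ?_⟩ <;> norm_num <;> linarith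
      have h2c : ∀ i j : Fin 2, i ≠ j →
          (![δ, 1] : Fin 2 → ℝ) i ≤ (![0, δ] : Fin 2 → ℝ) j ∨
          (![δ, 1] : Fin 2 → ℝ) j ≤ (![0, δ] : Fin 2 → ℝ) i := by
        intro i j hij
        fin_cases i <;> fin_cases j <;> simp_all
      refine le_trans (le_of_eq ?_) (le_iSup_of_le 2 (le_iSup_of_le ![0, δ]
        (le_iSup_of_le ![δ, 1] (le_iSup_of_le h1c (le_iSup_of_le h2c le_rfl)))))
      rw [Fin.sum_univ_two]
      have c0 : ((0 : Fin 2) : ℕ) = 0 := rfl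
      have c1 : ((1 : Fin 2) : ℕ) = 1 := rfl
      simp only [Matrix.cons_val_zero, Matrix.cons_val_one, Matrix.head_cons, c0, c1]
      rw [fex_zero, fex_one, hfexδ, sub_zero, abs_of_nonneg hM0.le,
        abs_of_nonneg (by linarith : (0:ℝ) ≤ 1 - M)]
      exact ENNReal.ofReal_add (div_nonneg hM0.le hl0.le)
        (div_nonneg (by linarith) hl1.le)
  constructor
  · rw [key, hfexδ, fex_zero, fex_one, sub_zero]
  · rw [key]
    congr 1
    rw [hM]
    ring
end

section
/- Let f : [0,1] → ℝ be the piecewise linear function f(x) = 1.5x for 0 ≤ x ≤ 1/3, f(x) = 0.5 for 1/3 < x ≤ 2/3, and f(x) = 1.5x − 0.5 for 2/3 < x ≤ 1. Then for every n ≥ 1 and every δ with 2/3 < δ < 1, the n-th Bernstein polynomial of f satisfies B_nf(δ) > f(δ). -/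
open Filter Set MeasureTheory
open scoped ENNReal Topology

/-!
The line `ℓ t = 3/2 t - 1/2` lies below `fex`, touches it on `(2/3, 1]` and lies strictly
below it at the node `0`. Bernstein operators reproduce affine functions and, at an interior
point, are strictly monotone in the node values, so `B_n fex δ > B_n ℓ δ = ℓ δ = fex δ`.
-/

open Finset

lemma bern_eq_sum_eval (n : ℕ) (f : ℝ → ℝ) (x : ℝ) :
    bern n f x = ∑ k ∈ range (n + 1), f (k / n) * (bernsteinPolynomial ℝ n k).eval x := by
  simp only [bern, bernsteinPolynomial, Polynomial.eval_mul, Polynomial.eval_pow,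
    Polynomial.eval_natCast, Polynomial.eval_sub, Polynomial.eval_one, Polynomial.eval_X, mul_assoc]

lemma bernsteinPolynomial_eval_pos {n k : ℕ} (hk : k ≤ n) {x : ℝ} (hx0 : 0 < x) (hx1 : x < 1) :
    0 < (bernsteinPolynomial ℝ n k).eval x := by
  have hchoose : (0 : ℝ) < n.choose k := by exact_mod_cast Nat.choose_pos hk
  have h1x : 0 < 1 - x := sub_pos.mpr hx1
  simp only [bernsteinPolynomial, Polynomial.eval_mul, Polynomial.eval_pow,
    Polynomial.eval_natCast, Polynomial.eval_sub, Polynomial.eval_one, Polynomial.eval_X]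
  positivity

lemma bern_affine {n : ℕ} (hn : n ≠ 0) (a b x : ℝ) :
    bern n (fun t => a * t + b) x = a * x + b := by
  have hsum := congrArg (Polynomial.eval x) (bernsteinPolynomial.sum ℝ n)
  have hmean := congrArg (Polynomial.eval x) (bernsteinPolynomial.sum_smul ℝ n)
  simp only [Polynomial.eval_finsetSum, Polynomial.eval_one,
    Polynomial.eval_mul, Polynomial.eval_natCast, Polynomial.eval_X, nsmul_eq_mul] at hsum hmean
  have hn' : (n : ℝ) ≠ 0 := Nat.cast_ne_zero.mpr hn
  calc bern n (fun t => a * t + b) x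
      = a / n * ∑ k ∈ range (n + 1), k * (bernsteinPolynomial ℝ n k).eval x
          + b * ∑ k ∈ range (n + 1), (bernsteinPolynomial ℝ n k).eval x := by
        rw [bern_eq_sum_eval, mul_sum, mul_sum, ← sum_add_distrib]
        exact sum_congr rfl fun k _ => by ring
    _ = a * x + b := by rw [hmean, hsum]; field_simp

lemma bern_lt_bern {n : ℕ} {f g : ℝ → ℝ} {x : ℝ} (hx0 : 0 < x) (hx1 : x < 1)
    (hle : ∀ k ≤ n, f (k / n) ≤ g (k / n)) (hlt : ∃ k ≤ n, f (k / n) < g (k / n)) :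
    bern n f x < bern n g x := by
  rw [bern_eq_sum_eval, bern_eq_sum_eval]
  obtain ⟨k, hk, hfg⟩ := hlt
  refine sum_lt_sum (fun j hj => ?_) ⟨k, mem_range_succ_iff.mpr hk, ?_⟩
  · have hj' := mem_range_succ_iff.mp hj
    exact mul_le_mul_of_nonneg_right (hle j hj')
      (bernsteinPolynomial_eval_pos hj' hx0 hx1).le
  · exact mul_lt_mul_of_pos_right hfg (bernsteinPolynomial_eval_pos hk hx0 hx1)

lemma affine_le_fex (t : ℝ) : 3 / 2 * t + -1 / 2 ≤ fex t := by
  unfold fex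
  split_ifs <;> linarith

lemma fex_of_two_thirds_lt {x : ℝ} (hx : 2 / 3 < x) : fex x = 3 / 2 * x + -1 / 2 := by
  rw [fex, if_neg (by linarith), if_neg (by linarith)]
  ring

/-- For every `n ≥ 1` and every `2/3 < δ < 1`, `B_n f(δ) > f(δ)`. -/
theorem bernstein_fex_gt (n : ℕ) (hn : 1 ≤ n) (δ : ℝ) (hδ1 : 2 / 3 < δ) (hδ2 : δ < 1) :
    bern n fex δ > fex δ := by
  have hline : bern n (fun t => 3 / 2 * t + -1 / 2) δ = fex δ := by
    rw [bern_affine (by omega), fex_of_two_thirds_lt hδ1]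
  rw [← hline]
  refine bern_lt_bern (by linarith) hδ2 (fun k _ => affine_le_fex _) ⟨0, n.zero_le, ?_⟩
  norm_num [fex]
end

section
/- If Λ is a Λ-sequence and f ∈ 𝔄, then f is of bounded Λ-variation if and only if sup_{n≥1} ‖B_nf‖_Λ < ∞. -/
open Filter Set MeasureTheory
open scoped ENNReal Topology

/-- The class `𝔄`: bounded functions on `[0,1]` with one-sided limits at every interior
point, whose value there lies between the two one-sided limits. -/
def MemA (f : ℝ → ℝ) : Prop :=
  (∃ C : ℝ, ∀ x ∈ Set.Icc (0 : ℝ) 1, |f x| ≤ C) ∧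
  ∀ x ∈ Set.Ioo (0 : ℝ) 1, ∃ L R : ℝ,
    Tendsto f (𝓝[<] x) (𝓝 L) ∧ Tendsto f (𝓝[>] x) (𝓝 R) ∧
    min L R ≤ f x ∧ f x ≤ max L R

/-!
For a tuple `x₀ ≤ ⋯ ≤ xₘ`, `B_n f (xⱼ)` is the mean of `f (Nⱼ / n)`, where `Nⱼ` counts how many
of `n` independent uniform points of `[0,1]` lie below `xⱼ`. The counts are monotone in `j`, so
every Λ-sum of `B_n f` is an average of Λ-sums of `f`. Hence `V_Λ(B_n f) ≤ V_Λ(f)`, and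
`B_n f (0) = f (0)`.

Conversely, `B_n f → f` at the continuity points of `f`, and a function of `𝔄` is continuous
off its countably many jump points. Λ-sums of `f` at points of convergence are limits of Λ-sums of
`B_n f`. Every `f a` lies, up to `ε`, between values of `f` at points of convergence just left and
right of `a`, and this bounds `V_Λ(f)` by four times `sup_n V_Λ(B_n f)`.
-/

section Tuples

def interleave {α : Type*} {k : ℕ} (a b : Fin (k + 1) → α) (t : Fin (2 * k + 2)) : α :=
  if t.val % 2 = 0 then a ⟨t / 2, by omega⟩ else b ⟨t / 2, by omega⟩

section Interleave

variable {α : Type*} {k : ℕ} (a b : Fin (k + 1) → α)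

@[simp] lemma interleave_two_mul (i : Fin (k + 1)) :
    interleave a b ⟨2 * i, by omega⟩ = a i := by
  simp [interleave, show 2 * i.val / 2 = i by omega]

@[simp] lemma interleave_two_mul_add_one (i : Fin (k + 1)) :
    interleave a b ⟨2 * i + 1, by omega⟩ = b i := by
  simp [interleave, show (2 * i.val + 1) / 2 = i by omega]

lemma monotone_interleave [Preorder α] {a b : Fin (k + 1) → α} (hab : ∀ i, a i ≤ b i)
    (hba : ∀ i j, i < j → b i ≤ a j) : Monotone (interleave a b) := by
  refine Fin.monotone_iff_le_succ.mpr fun t => ?_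
  simp only [interleave, Fin.val_succ, Fin.val_castSucc]
  rcases Nat.mod_two_eq_zero_or_one t with ht | ht
  · simp only [if_pos ht, if_neg (show (t.val + 1) % 2 ≠ 0 by omega),
      show (t.val + 1) / 2 = t.val / 2 by omega]
    exact hab _
  · rw [if_neg (by omega), if_pos (by omega)]
    exact hba _ _ (Fin.mk_lt_mk.mpr (by omega))

end Interleave

lemma Fin.exists_injective_comp_two_mul {k : ℕ} {γ : Fin (k + 1) → ℕ}
    (hγ : Function.Injective γ) : ∃ γ' : Fin (2 * k + 1) → ℕ, Function.Injective γ' ∧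
      ∀ i : Fin (k + 1), γ' ⟨2 * i, by omega⟩ = γ i := by
  set N := Finset.univ.sup γ + 1
  have hγN : ∀ i, γ i < N := fun i => Nat.lt_succ_of_le (Finset.le_sup (Finset.mem_univ i))
  refine ⟨fun t => if t.val % 2 = 0 then γ ⟨t / 2, by omega⟩ else N + t, fun s t hst => ?_,
    fun i => by simp [show 2 * i.val / 2 = i by omega]⟩
  simp only at hst
  split_ifs at hst with hs ht ht
  · have := congrArg Fin.val (hγ hst); simp only at this; ext; omega
  · have := hγN ⟨s / 2, by omega⟩; omega
  · have := hγN ⟨t / 2, by omega⟩; omega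
  · ext; omega

lemma StrictMono.val_le_fin {k : ℕ} {e : Fin k → ℕ} (he : StrictMono e) (i : Fin k) :
    (i : ℕ) ≤ e i := by
  obtain ⟨i, hi⟩ := i
  induction i with
  | zero => exact Nat.zero_le _
  | succ i ih =>
    have := he (show (⟨i, by omega⟩ : Fin k) < ⟨i + 1, hi⟩ from Nat.lt_succ_self i)
    have := ih (by omega)
    simp only at *
    omega

lemma Fin.exists_perm_val_le {k : ℕ} {γ : Fin k → ℕ} (hγ : Function.Injective γ) :
    ∃ σ : Equiv.Perm (Fin k), ∀ j, (σ j : ℕ) ≤ γ j := by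
  classical
  have hcard : (Finset.univ.image γ).card = k := by
    rw [Finset.card_image_of_injective _ hγ, Finset.card_fin]
  have hrange (j : Fin k) : ∃ i, (Finset.univ.image γ).orderEmbOfFin hcard i = γ j := by
    rw [← Set.mem_range, Finset.range_orderEmbOfFin]
    exact Finset.mem_image_of_mem _ (Finset.mem_univ j)
  choose τ hτ using hrange
  have hτinj : Function.Injective τ := fun a b h => hγ (by rw [← hτ a, ← hτ b, h])
  refine ⟨Equiv.ofBijective τ (Finite.injective_iff_bijective.mp hτinj), fun j => ?_⟩
  rw [Equiv.ofBijective_apply, ← hτ j]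
  exact ((Finset.univ.image γ).orderEmbOfFin hcard).strictMono.val_le_fin _

end Tuples

section LambdaVariation

variable {l : ℕ → ℝ} {f : ℝ → ℝ} {K : Set ℝ}

lemma lamVarOn_mono {K' : Set ℝ} (h : K ⊆ K') : lamVarOn l f K ≤ lamVarOn l f K' :=
  iSup_mono fun _ => iSup_mono fun _ => iSup_mono fun _ =>
    iSup_le fun hK => le_iSup_of_le (fun j => h (hK j)) le_rfl

lemma sum_le_lamVarOn {m : ℕ} {x : Fin (m + 1) → ℝ} (hx : Monotone x) (hxK : ∀ j, x j ∈ K)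
    (β : Equiv.Perm (Fin m)) :
    ∑ j, ENNReal.ofReal (|f (x j.succ) - f (x j.castSucc)| / l (β j)) ≤ lamVarOn l f K :=
  le_iSup_of_le m <| le_iSup_of_le x <| le_iSup_of_le hx <| le_iSup_of_le hxK <|
    le_iSup_of_le β le_rfl

lemma sum_le_lamVarOn_of_injective (hmono : Monotone l) (hpos : ∀ n, 0 < l n) {m : ℕ}
    {x : Fin (m + 1) → ℝ} (hx : Monotone x) (hxK : ∀ j, x j ∈ K) {γ : Fin m → ℕ}
    (hγ : Function.Injective γ) :
    ∑ j, ENNReal.ofReal (|f (x j.succ) - f (x j.castSucc)| / l (γ j)) ≤ lamVarOn l f K := by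
  obtain ⟨σ, hσ⟩ := Fin.exists_perm_val_le hγ
  refine le_trans (Finset.sum_le_sum fun j _ => ?_) (sum_le_lamVarOn hx hxK σ)
  exact ENNReal.ofReal_le_ofReal <|
    div_le_div_of_nonneg_left (abs_nonneg _) (hpos _) (hmono (hσ j))

/-- The intervals `[a i, b i]` are the gaps `2 i` of the tuple `interleave a b`. -/
lemma sum_intervals_le_lamVarOn_fin (hmono : Monotone l) (hpos : ∀ n, 0 < l n) {k : ℕ}
    {a b : Fin k → ℝ} (hab : ∀ i, a i ≤ b i) (hba : ∀ i j, i < j → b i ≤ a j)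
    (ha : ∀ i, a i ∈ K) (hb : ∀ i, b i ∈ K) {γ : Fin k → ℕ} (hγ : Function.Injective γ) :
    ∑ i, ENNReal.ofReal (|f (b i) - f (a i)| / l (γ i)) ≤ lamVarOn l f K := by
  cases k with
  | zero => simp
  | succ k =>
  obtain ⟨γ', hγ', hγ'γ⟩ := Fin.exists_injective_comp_two_mul hγ
  set q := interleave a b
  let e : Fin (k + 1) ↪ Fin (2 * k + 1) :=
    ⟨fun i => ⟨2 * i, by omega⟩, fun i j h => by ext; simpa using h⟩
  calc ∑ i, ENNReal.ofReal (|f (b i) - f (a i)| / l (γ i))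
      = ∑ t ∈ Finset.univ.map e,
          ENNReal.ofReal (|f (q t.succ) - f (q t.castSucc)| / l (γ' t)) := by
        rw [Finset.sum_map]
        refine Finset.sum_congr rfl fun i _ => ?_
        rw [← interleave_two_mul a b i, ← interleave_two_mul_add_one a b i, ← hγ'γ i]
        rfl
    _ ≤ ∑ t, ENNReal.ofReal (|f (q t.succ) - f (q t.castSucc)| / l (γ' t)) :=
        Finset.sum_le_sum_of_subset (Finset.subset_univ _)
    _ ≤ lamVarOn l f K := by
        refine sum_le_lamVarOn_of_injective hmono hpos (monotone_interleave hab hba)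
          (fun t => ?_) hγ'
        simp only [interleave]
        split_ifs
        exacts [ha _, hb _]

lemma sum_intervals_le_lamVarOn {ι : Type*} [LinearOrder ι] (hmono : Monotone l)
    (hpos : ∀ n, 0 < l n) (s : Finset ι) {a b : ι → ℝ} (hab : ∀ i ∈ s, a i ≤ b i)
    (hba : ∀ i ∈ s, ∀ j ∈ s, i < j → b i ≤ a j) (ha : ∀ i ∈ s, a i ∈ K)
    (hb : ∀ i ∈ s, b i ∈ K) {γ : ι → ℕ} (hγ : InjOn γ s) :
    ∑ i ∈ s, ENNReal.ofReal (|f (b i) - f (a i)| / l (γ i)) ≤ lamVarOn l f K := by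
  set e := s.orderEmbOfFin rfl
  have he : ∀ i, e i ∈ s := s.orderEmbOfFin_mem rfl
  rw [← s.map_orderEmbOfFin_univ rfl, Finset.sum_map]
  exact sum_intervals_le_lamVarOn_fin hmono hpos (fun i => hab _ (he i))
    (fun i j hij => hba _ (he i) _ (he j) (e.strictMono hij)) (fun i => ha _ (he i))
    (fun i => hb _ (he i)) (fun i j hij => e.injective (hγ (he i) (he j) hij))

lemma sum_le_lamVarOn_of_average {Ω : Type*} [Fintype Ω] (hl : ∀ n, 0 ≤ l n) {g : ℝ → ℝ}
    {m : ℕ} {x : Fin (m + 1) → ℝ} (β : Equiv.Perm (Fin m)) {w : Ω → ℝ} (hw : ∀ ω, 0 ≤ w ω)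
    (hw1 : ∑ ω, w ω = 1) {T : Ω → Fin (m + 1) → ℝ} (hT : ∀ ω, Monotone (T ω))
    (hTK : ∀ ω j, T ω j ∈ K) (hg : ∀ j, g (x j) = ∑ ω, w ω * f (T ω j)) :
    ∑ j, ENNReal.ofReal (|g (x j.succ) - g (x j.castSucc)| / l (β j)) ≤ lamVarOn l f K := by
  have hterm : ∀ j, ENNReal.ofReal (|g (x j.succ) - g (x j.castSucc)| / l (β j)) ≤
      ∑ ω, ENNReal.ofReal (w ω) *
        ENNReal.ofReal (|f (T ω j.succ) - f (T ω j.castSucc)| / l (β j)) := by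
    intro j
    simp only [← ENNReal.ofReal_mul (hw _)]
    rw [← ENNReal.ofReal_sum_of_nonneg fun ω _ =>
      mul_nonneg (hw ω) (div_nonneg (abs_nonneg _) (hl _))]
    refine ENNReal.ofReal_le_ofReal ?_
    simp only [mul_div_assoc', ← Finset.sum_div]
    refine div_le_div_of_nonneg_right ?_ (hl _)
    rw [hg, hg, ← Finset.sum_sub_distrib]
    refine (Finset.abs_sum_le_sum_abs _ _).trans_eq (Finset.sum_congr rfl fun ω _ => ?_)
    rw [← mul_sub, abs_mul, abs_of_nonneg (hw ω)]
  calc _ ≤ ∑ j, ∑ ω, ENNReal.ofReal (w ω) *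
        ENNReal.ofReal (|f (T ω j.succ) - f (T ω j.castSucc)| / l (β j)) :=
        Finset.sum_le_sum fun j _ => hterm j
    _ = ∑ ω, ENNReal.ofReal (w ω) *
        ∑ j, ENNReal.ofReal (|f (T ω j.succ) - f (T ω j.castSucc)| / l (β j)) := by
        rw [Finset.sum_comm]; simp only [Finset.mul_sum]
    _ ≤ ∑ ω, ENNReal.ofReal (w ω) * lamVarOn l f K :=
        Finset.sum_le_sum fun ω _ => by gcongr; exact sum_le_lamVarOn (hT ω) (hTK ω) β
    _ = lamVarOn l f K := by
        rw [← Finset.sum_mul, ← ENNReal.ofReal_sum_of_nonneg fun ω _ => hw ω, hw1,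
          ENNReal.ofReal_one, one_mul]

lemma lamVarOn_le_of_tendsto {g : ℕ → ℝ → ℝ} {S : ℝ≥0∞}
    (hg : ∀ x ∈ K, Tendsto (fun n => g n x) atTop (𝓝 (f x)))
    (hS : ∀ᶠ n in atTop, lamVarOn l (g n) K ≤ S) : lamVarOn l f K ≤ S := by
  refine iSup_le fun m => iSup_le fun x => iSup_le fun hx => iSup_le fun hxK =>
    iSup_le fun β => le_of_tendsto ?_ (hS.mono fun n hn => (sum_le_lamVarOn hx hxK β).trans hn)
  refine tendsto_finsetSum _ fun j _ => (ENNReal.continuous_ofReal.tendsto _).comp ?_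
  exact ((hg _ (hxK _)).sub (hg _ (hxK _))).abs.div_const _

end LambdaVariation

section Hull

variable {l : ℕ → ℝ} {f : ℝ → ℝ}

lemma abs_sub_le_of_mem_hull {A B A' B' w w' ε : ℝ} (hw : min A B - ε ≤ w ∧ w ≤ max A B + ε)
    (hw' : min A' B' - ε ≤ w' ∧ w' ≤ max A' B' + ε) :
    |w' - w| ≤ |A' - A| + |B' - B| + (|B - A| + |B' - A'|) + 2 * ε := by
  rw [abs_le]
  have := le_abs_self (A' - A); have := neg_abs_le (A' - A)
  have := le_abs_self (B' - B); have := neg_abs_le (B' - B)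
  have := le_abs_self (B - A); have := neg_abs_le (B - A)
  have := le_abs_self (B' - A'); have := neg_abs_le (B' - A')
  constructor <;>
    rcases min_cases A B with ⟨_, _⟩ | ⟨_, _⟩ <;> rcases max_cases A B with ⟨_, _⟩ | ⟨_, _⟩ <;>
    rcases min_cases A' B' with ⟨_, _⟩ | ⟨_, _⟩ <;>
    rcases max_cases A' B' with ⟨_, _⟩ | ⟨_, _⟩ <;> linarith

lemma ofReal_abs_sub_div_le_of_mem_hull {x x' u u' v v' ε c : ℝ} (hc : 0 < c)
    (hxx' : x ≤ x') (hx : min (f u) (f v) - ε ≤ f x ∧ f x ≤ max (f u) (f v) + ε)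
    (hx' : min (f u') (f v') - ε ≤ f x' ∧ f x' ≤ max (f u') (f v') + ε) :
    ENNReal.ofReal (|f x' - f x| / c) ≤
      ENNReal.ofReal (|f u' - f u| / c) + ENNReal.ofReal (|f v' - f v| / c) +
        (if x < x' then ENNReal.ofReal (|f v - f u| / c) + ENNReal.ofReal (|f v' - f u'| / c)
          else 0) + ENNReal.ofReal (2 * ε / c) := by
  rcases hxx'.lt_or_eq with h | rfl
  · rw [if_pos h]
    refine (ENNReal.ofReal_le_ofReal (div_le_div_of_nonneg_right
      (abs_sub_le_of_mem_hull hx hx') hc.le)).trans ?_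
    simp only [add_div]
    exact ENNReal.ofReal_add_le.trans <| add_le_add (ENNReal.ofReal_add_le.trans <|
      add_le_add ENNReal.ofReal_add_le ENNReal.ofReal_add_le) le_rfl
  · simp

lemma Fin.exists_pos_two_mul_add_le {m : ℕ} (x : Fin (m + 1) → ℝ) :
    ∃ η > 0, ∀ j : Fin m, x j.castSucc < x j.succ → x j.castSucc + 2 * η ≤ x j.succ := by
  have hev : ∀ᶠ η in 𝓝 (0 : ℝ), ∀ j : Fin m, x j.castSucc < x j.succ →
      x j.castSucc + 2 * η ≤ x j.succ := by
    refine Filter.eventually_all.2 fun j => ?_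
    by_cases hj : x j.castSucc < x j.succ
    · have : Tendsto (fun η : ℝ => x j.castSucc + 2 * η) (𝓝 0) (𝓝 (x j.castSucc)) := by
        simpa using ((tendsto_id (x := 𝓝 (0 : ℝ))).const_mul (2 : ℝ)).const_add (x j.castSucc)
      exact (this.eventually (eventually_le_nhds hj)).mono fun η h _ => h
    · exact Eventually.of_forall fun _ h => absurd h hj
  obtain ⟨η, hη, hη0⟩ := ((hev.filter_mono nhdsWithin_le_nhds).and
    (self_mem_nhdsWithin (s := Ioi (0 : ℝ)))).exists
  exact ⟨η, hη0, hη⟩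

lemma monotone_of_forall_abs_sub_lt {m : ℕ} {x y : Fin (m + 1) → ℝ} (hx : Monotone x) {η : ℝ}
    (hgap : ∀ j : Fin m, x j.castSucc < x j.succ → x j.castSucc + 2 * η ≤ x j.succ)
    (hy : ∀ j, |y j - x j| < η) (hxy : ∀ i j, x i = x j → y i = y j) : Monotone y :=
  Fin.monotone_iff_le_succ.mpr fun j => by
    rcases (hx (Fin.castSucc_le_succ j)).lt_or_eq with h | h
    · linarith [hgap j h, abs_lt.mp (hy j.castSucc), abs_lt.mp (hy j.succ)]
    · exact (hxy _ _ h).le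

/-- Each term is bounded through the tuples `U`, `W` and the intervals `[U i, W i]` at both ends
of the nondegenerate gaps `i`; these four families are admissible for `lamVarOn l f K'`. -/
lemma sum_le_four_mul_add_of_hull (hmono : Monotone l) (hpos : ∀ n, 0 < l n) {K' : Set ℝ}
    {m : ℕ} {x U W : Fin (m + 1) → ℝ} (hx : Monotone x) (β : Equiv.Perm (Fin m)) {η ε : ℝ}
    (hgap : ∀ j : Fin m, x j.castSucc < x j.succ → x j.castSucc + 2 * η ≤ x j.succ)
    (hUx : ∀ j, x j - η < U j ∧ U j ≤ x j) (hWx : ∀ j, x j ≤ W j ∧ W j < x j + η)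
    (hUW : ∀ i j, x i = x j → U i = U j ∧ W i = W j) (hUK : ∀ j, U j ∈ K') (hWK : ∀ j, W j ∈ K')
    (hhull : ∀ j, min (f (U j)) (f (W j)) - ε ≤ f (x j) ∧ f (x j) ≤ max (f (U j)) (f (W j)) + ε) :
    ∑ j, ENNReal.ofReal (|f (x j.succ) - f (x j.castSucc)| / l (β j)) ≤
      4 * lamVarOn l f K' + ∑ j, ENNReal.ofReal (2 * ε / l (β j)) := by
  set J := Finset.univ.filter fun j : Fin m => x j.castSucc < x j.succ
  have hU : Monotone U := monotone_of_forall_abs_sub_lt hx hgap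
    (fun j => abs_lt.mpr ⟨by linarith [hUx j], by linarith [hUx j, hWx j]⟩)
    fun i j h => (hUW i j h).1
  have hW : Monotone W := monotone_of_forall_abs_sub_lt hx hgap
    (fun j => abs_lt.mpr ⟨by linarith [hUx j, hWx j], by linarith [hWx j]⟩)
    fun i j h => (hUW i j h).2
  have hsep : ∀ p q, x p + 2 * η ≤ x q → W p ≤ U q := fun p q h => by
    linarith [hWx p, hUx q]
  have hJ : ∀ i ∈ J, ∀ j ∈ J, i < j → x i.succ ≤ x j.castSucc := fun i _ j _ hij =>
    hx (Fin.succ_le_castSucc_iff.mpr hij)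
  have hgapJ : ∀ j ∈ J, x j.castSucc + 2 * η ≤ x j.succ := fun j hj =>
    hgap j (by simpa [J] using hj)
  have hβ : InjOn (fun j : Fin m => (β j : ℕ)) J := fun i _ j _ h => β.injective (Fin.ext h)
  have hC := sum_intervals_le_lamVarOn (f := f) hmono hpos J (a := fun j => U j.castSucc)
    (b := fun j => W j.castSucc) (fun j _ => (hUx _).2.trans (hWx _).1)
    (fun i hi j hj hij => hsep _ _ (by linarith [hgapJ i hi, hJ i hi j hj hij]))
    (fun j _ => hUK _) (fun j _ => hWK _) hβ
  have hD := sum_intervals_le_lamVarOn (f := f) hmono hpos J (a := fun j => U j.succ)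
    (b := fun j => W j.succ) (fun j _ => (hUx _).2.trans (hWx _).1)
    (fun i hi j hj hij => hsep _ _ (by linarith [hgapJ j hj, hJ i hi j hj hij]))
    (fun j _ => hUK _) (fun j _ => hWK _) hβ
  refine (Finset.sum_le_sum fun j _ => ofReal_abs_sub_div_le_of_mem_hull (hpos _)
    (hx (Fin.castSucc_le_succ j)) (hhull _) (hhull _)).trans ?_
  simp only [Finset.sum_add_distrib, ← Finset.sum_filter]
  calc _ ≤ lamVarOn l f K' + lamVarOn l f K' + (lamVarOn l f K' + lamVarOn l f K') +
        ∑ j, ENNReal.ofReal (2 * ε / l (β j)) := by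
        gcongr
        exacts [sum_le_lamVarOn hU hUK β, sum_le_lamVarOn hW hWK β]
    _ = _ := by ring

theorem lamVarOn_le_four_mul_of_hull (hmono : Monotone l) (hpos : ∀ n, 0 < l n)
    {K K' : Set ℝ} (happrox : ∀ a ∈ K, ∀ ε > 0, ∀ η > 0, ∃ u ∈ K', ∃ v ∈ K',
      a - η < u ∧ u ≤ a ∧ a ≤ v ∧ v < a + η ∧
        min (f u) (f v) - ε ≤ f a ∧ f a ≤ max (f u) (f v) + ε) :
    lamVarOn l f K ≤ 4 * lamVarOn l f K' := by
  refine iSup_le fun m => iSup_le fun x => iSup_le fun hx => iSup_le fun hxK =>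
    iSup_le fun β => ?_
  obtain ⟨η, hη, hgap⟩ := Fin.exists_pos_two_mul_add_le x
  set E : ℝ → ℝ≥0∞ := fun ε => ∑ j, ENNReal.ofReal (2 * ε / l (β j))
  have hbound : ∀ ε > 0, ∑ j, ENNReal.ofReal (|f (x j.succ) - f (x j.castSucc)| / l (β j)) ≤
      4 * lamVarOn l f K' + E ε := by
    intro ε hε
    choose u hu v hv hua hau hav hva hhull using fun a ha => happrox a ha ε hε η hη
    have hcongr : ∀ i j, x i = x j → u (x i) (hxK i) = u (x j) (hxK j) ∧
        v (x i) (hxK i) = v (x j) (hxK j) := by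
      intro i j h; simp only [h, and_self]
    exact sum_le_four_mul_add_of_hull hmono hpos hx β hgap (fun j => ⟨hua _ _, hau _ _⟩)
      (fun j => ⟨hav _ _, hva _ _⟩) hcongr (fun j => hu _ _) (fun j => hv _ _)
      fun j => hhull _ _
  have hE : Tendsto E (𝓝[>] 0) (𝓝 0) := by
    have : Continuous E := continuous_finsetSum _ fun j _ =>
      ENNReal.continuous_ofReal.comp (by fun_prop)
    simpa [E] using (this.tendsto 0).mono_left nhdsWithin_le_nhds
  exact ge_of_tendsto (by simpa using tendsto_const_nhds.add hE)
    (eventually_nhdsWithin_of_forall (s := Ioi 0) hbound)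

end Hull

section Bernstein

theorem sum_prod_mul_card_filter {M R : Type*} [Fintype M] [CommSemiring R] (p : M → R)
    (P : M → Prop) [DecidablePred P] (n : ℕ) (g : ℕ → R) :
    ∑ ω : Fin n → M, (∏ i, p (ω i)) * g (Finset.univ.filter fun i => P (ω i)).card =
      ∑ k ∈ Finset.range (n + 1), (n.choose k : R) * (∑ c ∈ Finset.univ.filter P, p c) ^ k *
        (∑ c ∈ Finset.univ.filter (¬ P ·), p c) ^ (n - k) * g k := by
  classical
  set q := ∑ c ∈ Finset.univ.filter P, p c
  set r := ∑ c ∈ Finset.univ.filter (¬ P ·), p c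
  have hfiber : ∀ A : Finset (Fin n),
      ∑ ω ∈ Finset.univ.filter (fun ω : Fin n → M => Finset.univ.filter (fun i => P (ω i)) = A),
        ∏ i, p (ω i) = q ^ A.card * r ^ (n - A.card) := by
    intro A
    have hA : Finset.univ.filter (fun ω : Fin n → M => Finset.univ.filter (fun i => P (ω i)) = A) =
        Fintype.piFinset fun i => Finset.univ.filter fun c => (P c ↔ i ∈ A) := by
      ext ω; simp [Finset.ext_iff]
    rw [hA, ← Finset.prod_univ_sum]
    have hi : ∀ i, ∑ c ∈ Finset.univ.filter (fun c => (P c ↔ i ∈ A)), p c =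
        if i ∈ A then q else r := by
      intro i; split_ifs with h <;> simp [q, r, h]
    simp only [hi, Finset.prod_ite, Finset.prod_const, Finset.filter_mem_eq_inter,
      Finset.univ_inter]
    rw [Finset.filter_not, Finset.filter_mem_eq_inter, Finset.univ_inter,
      ← Finset.compl_eq_univ_sdiff, Finset.card_compl, Fintype.card_fin]
  calc ∑ ω : Fin n → M, (∏ i, p (ω i)) * g (Finset.univ.filter fun i => P (ω i)).card
      = ∑ A : Finset (Fin n), q ^ A.card * r ^ (n - A.card) * g A.card := by
        rw [← Finset.sum_fiberwise Finset.univ (fun ω : Fin n → M =>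
          Finset.univ.filter fun i => P (ω i))]
        refine Finset.sum_congr rfl fun A _ => ?_
        rw [← hfiber, Finset.sum_mul]
        refine Finset.sum_congr rfl fun ω hω => ?_
        rw [(Finset.mem_filter.mp hω).2]
    _ = _ := by
        rw [← Finset.powerset_univ,
          Finset.sum_powerset_apply_card (fun k => q ^ k * r ^ (n - k) * g k),
          Finset.card_univ, Fintype.card_fin]
        simp only [nsmul_eq_mul, mul_assoc]

variable {l : ℕ → ℝ} {f : ℝ → ℝ} {m : ℕ}

/-- `x` padded to `0, x 0, …, x m, 1, 1, …`; its consecutive differences are the masses of the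
cells into which `x` cuts `[0,1]`. -/
noncomputable def padUnit (x : Fin (m + 1) → ℝ) (c : ℕ) : ℝ :=
  if c = 0 then 0 else if h : c ≤ m + 1 then x ⟨c - 1, by omega⟩ else 1

noncomputable def cellMass (x : Fin (m + 1) → ℝ) (c : Fin (m + 2)) : ℝ :=
  padUnit x (c + 1) - padUnit x c

lemma monotone_padUnit {x : Fin (m + 1) → ℝ} (hx : Monotone x)
    (hxI : ∀ j, x j ∈ Icc (0 : ℝ) 1) : Monotone (padUnit x) := by
  refine monotone_nat_of_le_succ fun c => ?_
  simp only [padUnit]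
  split_ifs
  all_goals first | contradiction | omega | rfl | exact (hxI _).1 | exact (hxI _).2 |
    exact hx (Fin.mk_le_mk.mpr (by omega))

lemma cellMass_nonneg {x : Fin (m + 1) → ℝ} (hx : Monotone x)
    (hxI : ∀ j, x j ∈ Icc (0 : ℝ) 1) (c : Fin (m + 2)) : 0 ≤ cellMass x c :=
  sub_nonneg.mpr (monotone_padUnit hx hxI (Nat.le_succ c))

lemma sum_cellMass_le (x : Fin (m + 1) → ℝ) (j : Fin (m + 1)) :
    ∑ c ∈ Finset.univ.filter (fun c : Fin (m + 2) => (c : ℕ) ≤ j), cellMass x c = x j := by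
  simp only [cellMass]
  rw [Finset.sum_filter, Fin.sum_univ_eq_sum_range
    (fun c => if c ≤ (j : ℕ) then padUnit x (c + 1) - padUnit x c else 0), ← Finset.sum_filter,
    show (Finset.range (m + 2)).filter (· ≤ (j : ℕ)) = Finset.range (j + 1) by
      ext c; simp only [Finset.mem_filter, Finset.mem_range]; omega,
    Finset.sum_range_sub]
  simp [padUnit, Nat.le_of_lt_succ j.isLt]

lemma sum_cellMass (x : Fin (m + 1) → ℝ) : ∑ c, cellMass x c = 1 := by
  simp only [cellMass]
  rw [Fin.sum_univ_eq_sum_range (fun c => padUnit x (c + 1) - padUnit x c), Finset.sum_range_sub]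
  simp [padUnit]

lemma sum_cellMass_gt (x : Fin (m + 1) → ℝ) (j : Fin (m + 1)) :
    ∑ c ∈ Finset.univ.filter (fun c : Fin (m + 2) => ¬ (c : ℕ) ≤ j), cellMass x c = 1 - x j := by
  rw [← sum_cellMass x, ← Finset.sum_filter_add_sum_filter_not Finset.univ
    (fun c : Fin (m + 2) => (c : ℕ) ≤ j), sum_cellMass_le]
  ring

lemma bern_eq_sum_cells (f : ℝ → ℝ) (n : ℕ) (x : Fin (m + 1) → ℝ) (j : Fin (m + 1)) :
    bern n f (x j) = ∑ ω : Fin n → Fin (m + 2), (∏ i, cellMass x (ω i)) *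
      f ((Finset.univ.filter fun i => (ω i : ℕ) ≤ j).card / n) := by
  have h := sum_prod_mul_card_filter (cellMass x) (fun c : Fin (m + 2) => (c : ℕ) ≤ j) n
    (fun k => f (k / n))
  rw [sum_cellMass_le, sum_cellMass_gt] at h
  rw [h, bern]
  exact Finset.sum_congr rfl fun k _ => by ring

theorem lamVar_bern_le (hl : ∀ n, 0 ≤ l n) (f : ℝ → ℝ) (n : ℕ) :
    lamVar l (bern n f) ≤ lamVar l f := by
  refine iSup_le fun m => iSup_le fun x => iSup_le fun hx => iSup_le fun hxI =>
    iSup_le fun β => sum_le_lamVarOn_of_average hl β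
      (fun ω => Finset.prod_nonneg fun i _ => cellMass_nonneg hx hxI _) ?_ ?_ ?_
      (bern_eq_sum_cells f n x)
  · rw [← Fintype.sum_pow, sum_cellMass, one_pow]
  · intro ω i j hij
    refine div_le_div_of_nonneg_right ?_ n.cast_nonneg
    exact_mod_cast Finset.card_le_card fun c hc => by
      simp only [Finset.mem_filter, Finset.mem_univ, true_and] at hc ⊢
      exact hc.trans hij
  · intro ω j
    refine ⟨by positivity, div_le_one_of_le₀ ?_ n.cast_nonneg⟩
    exact_mod_cast (Finset.card_filter_le _ _).trans_eq (Finset.card_fin n)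

lemma bern_zero (f : ℝ → ℝ) (n : ℕ) : bern n f 0 = f 0 := by
  simp [bern, Finset.sum_range_succ']

lemma bern_one (f : ℝ → ℝ) {n : ℕ} (hn : n ≠ 0) : bern n f 1 = f 1 := by
  rw [bern, Finset.sum_range_succ, Finset.sum_eq_zero fun k hk => ?_]
  · simp [hn]
  · rw [sub_self, zero_pow (by simp at hk; omega), mul_zero]

theorem lamNorm_bern_le (hl : ∀ n, 0 ≤ l n) (f : ℝ → ℝ) (n : ℕ) :
    lamNorm l (bern n f) ≤ lamNorm l f := by
  rw [lamNorm, lamNorm, bern_zero]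
  gcongr
  exact lamVar_bern_le hl f n

end Bernstein

section Convergence

variable {f : ℝ → ℝ} {C : ℝ}

lemma bern_eq_sum_bernstein (f : ℝ → ℝ) (n : ℕ) (y : unitInterval) :
    bern n f y = ∑ k : Fin (n + 1), f (bernstein.z k) * bernstein n k y := by
  rw [bern, ← Fin.sum_univ_eq_sum_range (fun k => f (k / n) * n.choose k * (y : ℝ) ^ k *
    (1 - (y : ℝ)) ^ (n - k))]
  refine Finset.sum_congr rfl fun k _ => ?_
  rw [bernstein_apply, bernstein.z]
  ring

lemma abs_sub_le_add_sq {δ ε y t : ℝ} (hδ : 0 < δ) (hy : |f y| ≤ C) (ht : |f t| ≤ C)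
    (hnear : |t - y| < δ → |f t - f y| ≤ ε) (hε : 0 ≤ ε) :
    |f t - f y| ≤ ε + 2 * C / δ ^ 2 * (y - t) ^ 2 := by
  have hK : 0 ≤ 2 * C / δ ^ 2 :=
    div_nonneg (by linarith [(abs_nonneg (f y)).trans hy]) (by positivity)
  by_cases htδ : |t - y| < δ
  · linarith [hnear htδ, mul_nonneg hK (sq_nonneg (y - t))]
  · have hsq : δ ^ 2 ≤ (y - t) ^ 2 := by
      rw [← sq_abs (y - t), abs_sub_comm]; exact pow_le_pow_left₀ hδ.le (not_lt.mp htδ) 2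
    calc |f t - f y| ≤ 2 * C := (abs_sub _ _).trans (by linarith)
      _ = 2 * C / δ ^ 2 * δ ^ 2 := by field_simp
      _ ≤ ε + 2 * C / δ ^ 2 * (y - t) ^ 2 := by nlinarith

lemma abs_bern_sub_le (hC : ∀ t ∈ Icc (0 : ℝ) 1, |f t| ≤ C) {δ ε : ℝ} (hδ : 0 < δ)
    (hε : 0 ≤ ε) (y : unitInterval)
    (hnear : ∀ t ∈ Icc (0 : ℝ) 1, |t - y| < δ → |f t - f y| ≤ ε) {n : ℕ} (hn : n ≠ 0) :
    |bern n f y - f y| ≤ ε + 2 * C / δ ^ 2 / n := by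
  have hC0 : 0 ≤ C := (abs_nonneg _).trans (hC y y.2)
  have hsum : bern n f y - f y =
      ∑ k : Fin (n + 1), (f (bernstein.z k) - f y) * bernstein n k y := by
    simp only [sub_mul, Finset.sum_sub_distrib, ← Finset.mul_sum, bernstein.probability, mul_one,
      bern_eq_sum_bernstein]
  calc |bern n f y - f y|
      ≤ ∑ k : Fin (n + 1), (ε + 2 * C / δ ^ 2 * ((y : ℝ) - bernstein.z k) ^ 2) *
          bernstein n k y := by
        rw [hsum]
        refine (Finset.abs_sum_le_sum_abs _ _).trans (Finset.sum_le_sum fun k _ => ?_)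
        rw [abs_mul, abs_of_nonneg bernstein_nonneg]
        exact mul_le_mul_of_nonneg_right (abs_sub_le_add_sq hδ (hC y y.2) (hC _ (bernstein.z k).2)
          (hnear _ (bernstein.z k).2) hε) bernstein_nonneg
    _ = ε + 2 * C / δ ^ 2 * ((y : ℝ) * (1 - y) / n) := by
        simp only [add_mul, Finset.sum_add_distrib, ← Finset.mul_sum, mul_assoc,
          bernstein.probability, bernstein.variance hn, mul_one]
    _ ≤ ε + 2 * C / δ ^ 2 / n := by
        have : (y : ℝ) * (1 - y) ≤ 1 := by nlinarith [y.2.1, y.2.2]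
        rw [mul_div_assoc']
        gcongr
        exact mul_le_of_le_one_right (by positivity) this

theorem tendsto_bern_of_continuousWithinAt (hC : ∀ t ∈ Icc (0 : ℝ) 1, |f t| ≤ C) {y : ℝ}
    (hy : y ∈ Icc (0 : ℝ) 1) (hf : ContinuousWithinAt f (Icc 0 1) y) :
    Tendsto (fun n => bern n f y) atTop (𝓝 (f y)) := by
  refine Metric.tendsto_nhds.mpr fun ε hε => ?_
  obtain ⟨δ, hδ, hnear⟩ := Metric.continuousWithinAt_iff.mp hf (ε / 2) (half_pos hε)
  have hsmall : ∀ᶠ n : ℕ in atTop, 2 * C / δ ^ 2 / n < ε / 2 :=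
    (tendsto_const_div_atTop_nhds_zero_nat _).eventually (gt_mem_nhds (half_pos hε))
  filter_upwards [hsmall, eventually_ne_atTop 0] with n hn hn0
  rw [Real.dist_eq]
  have := abs_bern_sub_le (y := ⟨y, hy⟩) hC hδ (half_pos hε).le
    (fun t ht htδ => (hnear ht htδ).le) hn0
  simp only at this
  linarith

end Convergence

section JumpPoints

/-- The points with jump larger than `1 / (k + 1)` are isolated from the right within that set. -/
theorem countable_setOf_tendsto_ne (f : ℝ → ℝ) :
    {x | ∃ L R, Tendsto f (𝓝[<] x) (𝓝 L) ∧ Tendsto f (𝓝[>] x) (𝓝 R) ∧ L ≠ R}.Countable := by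
  set S : ℕ → Set ℝ := fun k => {x | ∃ L R, Tendsto f (𝓝[<] x) (𝓝 L) ∧
    Tendsto f (𝓝[>] x) (𝓝 R) ∧ 1 / ((k : ℝ) + 1) < dist L R}
  have hcover : {x | ∃ L R, Tendsto f (𝓝[<] x) (𝓝 L) ∧ Tendsto f (𝓝[>] x) (𝓝 R) ∧ L ≠ R} ⊆
      ⋃ k, S k := fun x ⟨L, R, hL, hR, hLR⟩ =>
    Set.mem_iUnion.mpr <|
      (exists_nat_one_div_lt (dist_pos.mpr hLR)).imp fun _ hk => ⟨L, R, hL, hR, hk⟩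
  refine (Set.countable_iUnion fun k => ?_).mono hcover
  refine (countable_setOfPred_isolated_right_within (s := S k)).mono fun x hx => ?_
  refine ⟨hx, ?_⟩
  obtain ⟨-, R, -, hR, -⟩ := hx
  set δ := 1 / ((k : ℝ) + 1)
  obtain ⟨u, hxu, hu⟩ := mem_nhdsGT_iff_exists_Ioo_subset.mp
    (hR (Metric.ball_mem_nhds R (show 0 < δ / 3 by positivity)))
  rw [← Filter.empty_mem_iff_bot, mem_nhdsWithin]
  refine ⟨Iio u, isOpen_Iio, hxu, fun y ⟨hyu, ⟨Ly, Ry, hLy, hRy, hy⟩, hxy⟩ => ?_⟩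
  have hdist : ∀ {F : Filter ℝ} [F.NeBot] {M : ℝ}, Tendsto f F (𝓝 M) →
      Ioo x u ∈ F → dist M R ≤ δ / 3 := fun hM hF =>
    le_of_tendsto (hM.dist tendsto_const_nhds)
      (Filter.mem_of_superset hF fun t ht => show dist (f t) R ≤ δ / 3 from le_of_lt (hu ht))
  have h1 := hdist hLy (Ioo_mem_nhdsLT_of_mem ⟨hxy, hyu.le⟩)
  have h2 := hdist hRy (Ioo_mem_nhdsGT_of_mem ⟨hxy.le, hyu⟩)
  have hδ : 0 < δ := by positivity
  linarith [dist_triangle_right Ly Ry R, show δ < dist Ly Ry from hy]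

end JumpPoints

section ClassA

variable {f : ℝ → ℝ}

def bernConvSet (f : ℝ → ℝ) : Set ℝ :=
  {y ∈ Icc 0 1 | Tendsto (fun n => bern n f y) atTop (𝓝 (f y))}

lemma MemA.continuousAt (hf : MemA f) {x : ℝ} (hx : x ∈ Ioo 0 1)
    (hjump : x ∉ {x | ∃ L R, Tendsto f (𝓝[<] x) (𝓝 L) ∧ Tendsto f (𝓝[>] x) (𝓝 R) ∧ L ≠ R}) :
    ContinuousAt f x := by
  obtain ⟨L, R, hL, hR, hmin, hmax⟩ := hf.2 x hx
  obtain rfl : L = R := by_contra fun h => hjump ⟨L, R, hL, hR, h⟩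
  obtain rfl : f x = L := le_antisymm (by simpa using hmax) (by simpa using hmin)
  exact continuousAt_iff_continuous_left'_right'.mpr ⟨hL, hR⟩

lemma MemA.exists_mem_bernConvSet_Ioo (hf : MemA f) {c d : ℝ} (hc : 0 ≤ c) (hcd : c < d)
    (hd : d ≤ 1) : ∃ y ∈ Ioo c d, y ∈ bernConvSet f := by
  obtain ⟨y, hyD, hy⟩ := ((countable_setOf_tendsto_ne f).dense_compl ℝ).exists_between hcd
  have hy01 : y ∈ Ioo (0 : ℝ) 1 := ⟨hc.trans_lt hy.1, hy.2.trans_le hd⟩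
  obtain ⟨C, hC⟩ := hf.1
  exact ⟨y, hy, Ioo_subset_Icc_self hy01, tendsto_bern_of_continuousWithinAt hC
    (Ioo_subset_Icc_self hy01) (hf.continuousAt hy01 hyD).continuousWithinAt⟩

/-- `u` and `v` are continuity points close to `a` where `f` is close to its one-sided limits. -/
theorem MemA.exists_hull_approx (hf : MemA f) {a : ℝ} (ha : a ∈ Icc (0 : ℝ) 1) {ε η : ℝ}
    (hε : 0 < ε) (hη : 0 < η) : ∃ u ∈ bernConvSet f, ∃ v ∈ bernConvSet f,
      a - η < u ∧ u ≤ a ∧ a ≤ v ∧ v < a + η ∧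
        min (f u) (f v) - ε ≤ f a ∧ f a ≤ max (f u) (f v) + ε := by
  have hself : a ∈ bernConvSet f → ∃ u ∈ bernConvSet f, ∃ v ∈ bernConvSet f,
      a - η < u ∧ u ≤ a ∧ a ≤ v ∧ v < a + η ∧
        min (f u) (f v) - ε ≤ f a ∧ f a ≤ max (f u) (f v) + ε := fun h =>
    ⟨a, h, a, h, by linarith, le_rfl, le_rfl, by linarith, by simp [hε.le], by simp [hε.le]⟩
  rcases ha.1.eq_or_lt with rfl | ha0
  · exact hself ⟨ha, by simp [bern_zero]⟩
  rcases ha.2.eq_or_lt with rfl | ha1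
  · exact hself ⟨ha, tendsto_const_nhds.congr'
      ((eventually_ne_atTop 0).mono fun n hn => (bern_one f hn).symm)⟩
  obtain ⟨L, R, hL, hR, hmin, hmax⟩ := hf.2 a ⟨ha0, ha1⟩
  obtain ⟨c, hc, hcL⟩ := mem_nhdsLT_iff_exists_Ioo_subset.mp <| Filter.inter_mem
    (hL (Metric.ball_mem_nhds L hε)) (nhdsWithin_le_nhds (Ioi_mem_nhds (by linarith : a - η < a)))
  obtain ⟨d, hd, hdR⟩ := mem_nhdsGT_iff_exists_Ioo_subset.mp <| Filter.inter_mem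
    (hR (Metric.ball_mem_nhds R hε)) (nhdsWithin_le_nhds (Iio_mem_nhds (by linarith : a < a + η)))
  obtain ⟨u, hu, hug⟩ := hf.exists_mem_bernConvSet_Ioo (le_max_right c 0)
    (max_lt hc ha0) ha.2
  obtain ⟨v, hv, hvg⟩ := hf.exists_mem_bernConvSet_Ioo ha.1 (lt_min hd ha1) (min_le_right d 1)
  obtain ⟨hfu, hua⟩ := hcL ⟨(le_max_left c 0).trans_lt hu.1, hu.2⟩
  obtain ⟨hfv, hva⟩ := hdR ⟨hv.1, hv.2.trans_le (min_le_left d 1)⟩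
  rw [mem_preimage, Metric.mem_ball, Real.dist_eq, abs_lt] at hfu hfv
  refine ⟨u, hug, v, hvg, hua, hu.2.le, hv.1.le, hva, ?_, ?_⟩
  · rcases min_cases L R with ⟨h, _⟩ | ⟨h, _⟩ <;>
      linarith [min_le_left (f u) (f v), min_le_right (f u) (f v)]
  · rcases max_cases L R with ⟨h, _⟩ | ⟨h, _⟩ <;>
      linarith [le_max_left (f u) (f v), le_max_right (f u) (f v)]

end ClassA

/-- If `Λ` is a Λ-sequence and `f ∈ 𝔄`, then `f` is of bounded Λ-variation
if and only if `sup_{n ≥ 1} ‖B_n f‖_Λ < ∞`. -/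
theorem memA_lamBV_iff_bernstein_bounded (l : ℕ → ℝ) (hl : IsLambdaSeq l)
    (f : ℝ → ℝ) (hf : MemA f) :
    lamVar l f < ⊤ ↔ (⨆ (n : ℕ) (_ : 1 ≤ n), lamNorm l (bern n f)) < ⊤ := by
  obtain ⟨hmono, hpos, -⟩ := hl
  set S := ⨆ (n : ℕ) (_ : 1 ≤ n), lamNorm l (bern n f)
  constructor
  · intro h
    calc S ≤ lamNorm l f := iSup₂_le fun n _ => lamNorm_bern_le (fun k => (hpos k).le) f n
      _ < ⊤ := ENNReal.add_lt_top.mpr ⟨h, ENNReal.ofReal_lt_top⟩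
  · intro h
    have hconv : lamVarOn l f (bernConvSet f) ≤ S :=
      lamVarOn_le_of_tendsto (fun y hy => hy.2) <| (eventually_ge_atTop 1).mono fun n hn =>
        calc lamVarOn l (bern n f) (bernConvSet f)
            ≤ lamVar l (bern n f) := lamVarOn_mono fun y hy => hy.1
          _ ≤ lamNorm l (bern n f) := le_self_add
          _ ≤ S := le_iSup₂ (f := fun n (_ : 1 ≤ n) => lamNorm l (bern n f)) n hn
    calc lamVar l f ≤ 4 * lamVarOn l f (bernConvSet f) :=
          lamVarOn_le_four_mul_of_hull hmono hpos fun a ha ε hε η hη =>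
            hf.exists_hull_approx ha hε hη
      _ ≤ 4 * S := by gcongr
      _ < ⊤ := ENNReal.mul_lt_top (by norm_num) h
end
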